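/- The number of ascent sequences of length n avoiding the pattern 011 is 2^{n-1}, and these are precisely the sequences consisting of a strictly increasing ascent sequence arbitrarily interspersed with 0's. -/

import Mathlib

/-!
In a 011-avoiding ascent sequence the nonzero letters are `1, 2, …, k` in order. Inductively, a
new letter `x` is at most `asc + 1 ≤ k + 1`, since every ascent ends in a nonzero letter; and a
nonzero `x ≤ k` already occurs after the initial `0`, so `0, x, x` would be an occurrence of 011.
Conversely, distinct nonzero letters rule out 011, and when they are `1, …, k` in order each of
them is an ascent, so the sequence is an ascent sequence. Such sequences are `0` followed by
`ofPattern b 0`, where `b ∈ {0,1}^(n-1)` marks the nonzero positions; hence there are `2^(n-1)`.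
-/

/-- Number of ascents (adjacent strict rises) in a list of naturals. -/
def ascList (l : List ℕ) : ℕ :=
  (l.zip l.tail).countP (fun p => decide (p.1 < p.2))

/-- `l` is an ascent sequence: nonempty, starts with 0, and each later letter is at most
one more than the number of ascents in the preceding prefix. -/
def IsAscSeq (l : List ℕ) : Prop :=
  l ≠ [] ∧ l.getD 0 0 = 0 ∧
    ∀ i, 0 < i → i < l.length → l.getD i 0 ≤ ascList (l.take i) + 1

/-- A sequence contains the pattern 011. -/
def Contains011 (l : List ℕ) : Prop :=
  ∃ i j k, i < j ∧ j < k ∧ k < l.length ∧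
    l.getD i 0 < l.getD j 0 ∧ l.getD j 0 = l.getD k 0

lemma ascList_cons_cons (x y : ℕ) (t : List ℕ) :
    ascList (x :: y :: t) = ascList (y :: t) + if x < y then 1 else 0 := by
  simp [ascList, List.countP_cons]

lemma ascList_le_countP_ne_zero (l : List ℕ) : ascList l ≤ l.countP (· ≠ 0) := by
  suffices h : ∀ x t, ascList (x :: t) ≤ t.countP (· ≠ 0) by
    cases l with
    | nil => rfl
    | cons x t => exact (h x t).trans (List.sublist_cons_self x t).countP_le
  intro x t
  induction t generalizing x with
  | nil => rfl
  | cons y t ih =>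
    rw [ascList_cons_cons, List.countP_cons]
    have := ih y
    by_cases hxy : x < y
    · rw [if_pos hxy, if_pos (by simpa using Nat.ne_zero_of_lt hxy)]
      omega
    · rw [if_neg hxy]
      split_ifs <;> omega

def ofPattern : List Bool → ℕ → List ℕ
  | [], _ => []
  | true :: b, c => (c + 1) :: ofPattern b (c + 1)
  | false :: b, c => 0 :: ofPattern b c

section OfPattern

variable (b : List Bool) (c : ℕ)

@[simp]
lemma length_ofPattern : (ofPattern b c).length = b.length := by
  induction b generalizing c with
  | nil => rfl
  | cons x b ih => cases x <;> simp [ofPattern, ih]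

lemma ofPattern_injective : Function.Injective (ofPattern · c) := by
  intro b b' h
  induction b generalizing b' c with
  | nil => cases b' with
    | nil => rfl
    | cons y b' => cases y <;> simp [ofPattern] at h
  | cons x b ih => cases b' with
    | nil => cases x <;> simp [ofPattern] at h
    | cons y b' => cases x <;> cases y <;> simp [ofPattern] at h <;> simp [ih _ h]

lemma take_ofPattern (i : ℕ) : (ofPattern b c).take i = ofPattern (b.take i) c := by
  induction b generalizing c i with
  | nil => simp [ofPattern]
  | cons x b ih => cases i <;> cases x <;> simp [ofPattern, ih]

lemma getD_ofPattern_le (i : ℕ) : (ofPattern b c).getD i 0 ≤ c + (b.take i).count true + 1 := by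
  induction b generalizing c i with
  | nil => simp [ofPattern]
  | cons x b ih =>
    cases i with
    | zero => cases x <;> simp [ofPattern]
    | succ i =>
      cases x
      · simpa [ofPattern] using ih c i
      · simpa [ofPattern, Nat.add_right_comm, Nat.add_assoc] using ih (c + 1) i

lemma ascList_cons_ofPattern {d : ℕ} (hd : d ≤ c) :
    ascList (d :: ofPattern b c) = b.count true := by
  induction b generalizing c d with
  | nil => rfl
  | cons x b ih =>
    cases x
    · simp [ofPattern, ascList_cons_cons, ih c (Nat.zero_le c)]
    · simp [ofPattern, ascList_cons_cons, ih (c + 1) le_rfl, Nat.lt_succ_of_le hd]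

lemma filter_ofPattern :
    (ofPattern b c).filter (· ≠ 0) = List.range' (c + 1) (b.count true) := by
  induction b generalizing c with
  | nil => rfl
  | cons x b ih =>
    cases x <;> simp only [ofPattern, List.filter_cons, ih, List.count_cons] <;>
      simp [List.range'_succ]

end OfPattern

lemma eq_ofPattern_of_filter_eq_range' {l : List ℕ} {c k : ℕ}
    (h : l.filter (· ≠ 0) = List.range' (c + 1) k) :
    l = ofPattern (l.map (· ≠ 0)) c := by
  induction l generalizing c k with
  | nil => rfl
  | cons x t ih =>
    by_cases hx : x = 0
    · subst hx
      rw [List.filter_cons_of_neg (by simp)] at h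
      exact congrArg (0 :: ·) (ih h)
    · rw [List.filter_cons_of_pos (by simpa using hx)] at h
      cases k with
      | zero => simp at h
      | succ k =>
        rw [List.range'_succ, List.cons.injEq] at h
        obtain ⟨rfl, h⟩ := h
        have hc : decide (c + 1 ≠ 0) = true := by simp
        rw [List.map_cons, hc, ofPattern, ← ih h]

lemma isAscSeq_zero_cons_ofPattern (b : List Bool) : IsAscSeq (0 :: ofPattern b 0) := by
  refine ⟨List.cons_ne_nil _ _, rfl, fun i hi hlen => ?_⟩
  obtain ⟨j, rfl⟩ := Nat.exists_eq_add_one.mpr hi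
  rw [List.getD_cons_succ, List.take_succ_cons, take_ofPattern,
    ascList_cons_ofPattern _ _ le_rfl]
  simpa using getD_ofPattern_le b 0 j

lemma not_contains011_of_nodup_filter {l : List ℕ} (h : (l.filter (· ≠ 0)).Nodup) :
    ¬ Contains011 l := by
  rintro ⟨i, j, k, -, hjk, hk, hlt, heq⟩
  have hj : j < l.length := by omega
  rw [List.getD_eq_getElem _ _ hj] at hlt heq
  rw [List.getD_eq_getElem _ _ hk] at heq
  rw [List.Nodup, List.pairwise_filter, List.pairwise_iff_getElem] at h
  exact h j k hj hk hjk (by simp; omega) (by simp; omega) heq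

lemma Contains011.append {l : List ℕ} (h : Contains011 l) (l' : List ℕ) :
    Contains011 (l ++ l') := by
  obtain ⟨i, j, k, hij, hjk, hk, h1, h2⟩ := h
  refine ⟨i, j, k, hij, hjk, by simp; omega, ?_, ?_⟩ <;>
    rwa [List.getD_append _ _ _ _ (by omega), List.getD_append _ _ _ _ (by omega)]

lemma contains011_append_getD {l : List ℕ} {p : ℕ} (hp : 0 < p) (hpl : p < l.length)
    (hlt : l.getD 0 0 < l.getD p 0) : Contains011 (l ++ [l.getD p 0]) := by
  refine ⟨0, p, l.length, hp, hpl, by simp, ?_, ?_⟩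
  · rwa [List.getD_append _ _ _ _ (by omega), List.getD_append _ _ _ _ hpl]
  · rw [List.getD_append _ _ _ _ hpl, List.getD_append_right _ _ _ _ le_rfl]
    simp

lemma IsAscSeq.of_append_singleton {l : List ℕ} {x : ℕ} (h : IsAscSeq (l ++ [x]))
    (hl : l ≠ []) : IsAscSeq l ∧ x ≤ ascList l + 1 := by
  obtain ⟨-, h0, hasc⟩ := h
  have hpos : 0 < l.length := List.length_pos_iff.mpr hl
  refine ⟨⟨hl, ?_, fun i hi hil => ?_⟩, ?_⟩
  · rwa [List.getD_append _ _ _ _ hpos] at h0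
  · have := hasc i hi (by simp; omega)
    rwa [List.getD_append _ _ _ _ hil, List.take_append_of_le_length hil.le] at this
  · have := hasc l.length hpos (by simp)
    rw [List.getD_append_right _ _ _ _ le_rfl, List.take_left' rfl] at this
    simpa using this

lemma filter_ne_zero_eq_range'_of_isAscSeq {l : List ℕ} (h1 : IsAscSeq l)
    (h2 : ¬ Contains011 l) : l.filter (· ≠ 0) = List.range' 1 (l.countP (· ≠ 0)) := by
  induction l using List.reverseRecOn with
  | nil => rfl
  | append_singleton l x ih =>
    rcases eq_or_ne l [] with rfl | hl
    · have hx : x = 0 := h1.2.1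
      simp [hx]
    obtain ⟨hl1, hx⟩ := h1.of_append_singleton hl
    have hA := ih hl1 (fun h => h2 (h.append [x]))
    have hasc := ascList_le_countP_ne_zero l
    rw [List.filter_append, List.countP_append, hA]
    generalize l.countP (· ≠ 0) = k at hA hasc ⊢
    by_cases hx0 : x = 0
    · simp [hx0]
    have hxk : x = k + 1 := by
      by_contra hne
      have hmem : x ∈ l.filter (· ≠ 0) := by rw [hA, List.mem_range'_1]; omega
      obtain ⟨p, hp, hpx⟩ := List.getElem_of_mem (List.mem_of_mem_filter hmem)
      rw [← List.getD_eq_getElem l 0 hp] at hpx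
      have hp0 : p ≠ 0 := by rintro rfl; exact hx0 (hpx ▸ hl1.2.1)
      exact h2 (hpx ▸ contains011_append_getD (Nat.pos_of_ne_zero hp0) hp
        (by rw [hl1.2.1, hpx]; omega))
    simp [hxk, List.range'_1_concat, Nat.add_comm 1 k]

lemma isAscSeq_and_not_contains011_iff {l : List ℕ} :
    IsAscSeq l ∧ ¬ Contains011 l ↔ ∃ b, l = 0 :: ofPattern b 0 := by
  constructor
  · rintro ⟨h1, h2⟩
    have hfilter := filter_ne_zero_eq_range'_of_isAscSeq h1 h2
    obtain ⟨hne, h0, -⟩ := h1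
    obtain ⟨x, t, rfl⟩ := List.exists_cons_of_ne_nil hne
    obtain rfl : x = 0 := h0
    rw [List.filter_cons_of_neg (by simp)] at hfilter
    exact ⟨_, congrArg (0 :: ·) (eq_ofPattern_of_filter_eq_range' hfilter)⟩
  · rintro ⟨b, rfl⟩
    refine ⟨isAscSeq_zero_cons_ofPattern b, not_contains011_of_nodup_filter ?_⟩
    rw [List.filter_cons_of_neg (by simp), filter_ofPattern]
    exact List.nodup_range'

lemma ncard_isAscSeq_not_contains011 {n : ℕ} (hn : 1 ≤ n) :
    {l : List ℕ | l.length = n ∧ IsAscSeq l ∧ ¬ Contains011 l}.ncard = 2 ^ (n - 1) := by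
  have hS : {l : List ℕ | l.length = n ∧ IsAscSeq l ∧ ¬ Contains011 l} =
      Set.range (fun b : List.Vector Bool (n - 1) => 0 :: ofPattern b.1 0) := by
    ext l
    simp only [Set.mem_ofPred_eq, isAscSeq_and_not_contains011_iff, Set.mem_range]
    constructor
    · rintro ⟨hlen, b, rfl⟩
      exact ⟨⟨b, by simp at hlen; omega⟩, rfl⟩
    · rintro ⟨b, rfl⟩
      exact ⟨by simp; omega, b.1, rfl⟩
  have hinj : Function.Injective (fun b : List.Vector Bool (n - 1) => 0 :: ofPattern b.1 0) :=
    fun b b' h => Subtype.ext (ofPattern_injective 0 (List.cons_injective h))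
  rw [hS, Set.ncard_range_of_injective hinj, Nat.card_eq_fintype_card, card_vector,
    Fintype.card_bool]

lemma IsAscSeq.not_contains011_iff {l : List ℕ} (h : IsAscSeq l) :
    ¬ Contains011 l ↔ ∃ m, l.filter (· ≠ 0) = (List.range m).map (· + 1) := by
  constructor
  · intro h2
    refine ⟨l.countP (· ≠ 0), ?_⟩
    rw [filter_ne_zero_eq_range'_of_isAscSeq h h2, List.range'_eq_map_range]
    simp only [Nat.add_comm 1]
  · rintro ⟨m, hm⟩
    refine not_contains011_of_nodup_filter ?_
    rw [hm]
    exact List.nodup_range.map (add_left_injective 1)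

/-- There are `2^(n-1)` ascent sequences of length `n` avoiding 011, and they are precisely
the strictly increasing ascent sequences `0,1,…,m` arbitrarily interspersed with 0's
(equivalently, the nonzero letters form `1,2,…,m` in order). -/
theorem stmt6 (n : ℕ) (hn : 1 ≤ n) :
    {l : List ℕ | l.length = n ∧ IsAscSeq l ∧ ¬ Contains011 l}.ncard = 2 ^ (n - 1) ∧
    (∀ l : List ℕ, IsAscSeq l →
      (¬ Contains011 l ↔
        ∃ m, l.filter (fun x => decide (x ≠ 0)) = (List.range m).map (· + 1))) :=
  ⟨ncard_isAscSeq_not_contains011 hn, fun _ h => h.not_contains011_iff⟩
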